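/- arXiv:1504.03842 — 4 statements merged into one kernel-verified Lean document; each statement's English description precedes it below -/
import Mathlib

section
/- Let n ≥ 1, let p be a real number with 2^{-n} ≤ p ≤ 1/2, let ε > 0, and let t be a natural number with t ≤ n and 2^t ≥ 1/(p·ε). Set s = ⌈p·2^n⌉. If c is chosen uniformly at random from {0, 1, …, 2^t − 1}, then the probability q of the event c·2^{n−t} ≤ s satisfies s/2^n ≤ q ≤ (1+ε)·s/2^n. -/
/-! The event `c * 2^(n-t) ≤ s` holds exactly for `c ≤ ⌊s / 2^(n-t)⌋`, so (as `s ≤ 2^n`) its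
probability is `(⌊s / 2^(n-t)⌋ + 1) / 2^t`. Since `⌊x⌋ + 1 ∈ (x, x + 1]`, this lies between `s / 2^n`
and `s / 2^n + 2^(-t)`, and the excess `2^(-t) ≤ p ε ≤ ε s / 2^n` is absorbed by the factor `1 + ε`. -/

open Finset

theorem card_filter_mul_le_eq_min (T d s : ℕ) (hd : 0 < d) :
    #{c : Fin T | (c : ℕ) * d ≤ s} = min (s / d + 1) T := by
  have h : ∀ c : ℕ, c * d ≤ s ↔ c < s / d + 1 := fun c => by
    rw [Nat.lt_succ_iff, Nat.le_div_iff_mul_le hd]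
  simp only [h, Fin.card_filter_val_lt, min_comm]

theorem div_le_card_filter_mul_le_div (T d s : ℕ) (hd : 0 < d) (hs : s ≤ d * T) :
    (s : ℝ) / (d * T) ≤ (#{c : Fin T | (c : ℕ) * d ≤ s} : ℝ) / T := by
  rw [card_filter_mul_le_eq_min T d s hd, Nat.cast_min, ← div_div]
  refine div_le_div_of_nonneg_right (le_min ?_ ?_) (T.cast_nonneg : (0 : ℝ) ≤ T)
  · rw [← Nat.floor_div_eq_div (K := ℝ)]
    push_cast
    exact (Nat.lt_floor_add_one _).le
  · rw [div_le_iff₀ (by exact_mod_cast hd)]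
    exact_mod_cast hs.trans_eq (mul_comm d T)

theorem card_filter_mul_le_div_le (T d s : ℕ) (hd : 0 < d) :
    (#{c : Fin T | (c : ℕ) * d ≤ s} : ℝ) / T ≤ (s : ℝ) / (d * T) + 1 / T := by
  rw [card_filter_mul_le_eq_min T d s hd, ← div_div, ← add_div]
  refine div_le_div_of_nonneg_right ?_ (T.cast_nonneg : (0 : ℝ) ≤ T)
  calc ((min (s / d + 1) T : ℕ) : ℝ) ≤ ((s / d : ℕ) : ℝ) + 1 := by exact_mod_cast min_le_left _ _
    _ ≤ s / d + 1 := by gcongr; exact Nat.cast_div_le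

theorem stmt_5_general (n t : ℕ) (p ε : ℝ)
    (hplb : 1 / 2 ^ n ≤ p) (hpub : p ≤ 1 / 2) (hε : 0 < ε)
    (htn : t ≤ n) (ht : 1 / (p * ε) ≤ (2 : ℝ) ^ t) :
    (⌈p * 2 ^ n⌉₊ : ℝ) / 2 ^ n ≤
      ((Finset.univ.filter (fun c : Fin (2 ^ t) =>
          (c : ℕ) * 2 ^ (n - t) ≤ ⌈p * 2 ^ n⌉₊)).card : ℝ) / 2 ^ t ∧
    ((Finset.univ.filter (fun c : Fin (2 ^ t) =>
        (c : ℕ) * 2 ^ (n - t) ≤ ⌈p * 2 ^ n⌉₊)).card : ℝ) / 2 ^ t ≤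
      (1 + ε) * (⌈p * 2 ^ n⌉₊ : ℝ) / 2 ^ n := by
  have hp : 0 < p := (by positivity : (0 : ℝ) < 1 / 2 ^ n).trans_le hplb
  set s := ⌈p * 2 ^ n⌉₊
  have hd : 0 < 2 ^ (n - t) := by positivity
  have hN : (2 : ℝ) ^ n = 2 ^ (n - t) * 2 ^ t := by rw [← pow_add, Nat.sub_add_cancel htn]
  have hps : p * 2 ^ n ≤ s := Nat.le_ceil _
  have hsN : s ≤ 2 ^ (n - t) * 2 ^ t := by
    rw [← pow_add, Nat.sub_add_cancel htn, Nat.ceil_le]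
    push_cast
    nlinarith [pow_pos (two_pos : (0 : ℝ) < 2) n]
  have hT : 1 / (2 : ℝ) ^ t ≤ ε * s / 2 ^ n := calc
    1 / (2 : ℝ) ^ t ≤ p * ε := (one_div_le (by positivity) (by positivity)).mp ht
    _ = ε * (p * 2 ^ n) / 2 ^ n := by field_simp
    _ ≤ ε * s / 2 ^ n := by gcongr
  have hlow := div_le_card_filter_mul_le_div (2 ^ t) (2 ^ (n - t)) s hd hsN
  have hupp := card_filter_mul_le_div_le (2 ^ t) (2 ^ (n - t)) s hd
  push_cast [← hN] at hlow hupp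
  refine ⟨hlow, hupp.trans ?_⟩
  calc (s : ℝ) / 2 ^ n + 1 / 2 ^ t ≤ s / 2 ^ n + ε * s / 2 ^ n := by gcongr
    _ = (1 + ε) * s / 2 ^ n := by ring

/-- Let `2^{-n} ≤ p ≤ 1/2`, `ε > 0`, `t ≤ n` with `2^t ≥ 1/(p·ε)`,
and `s = ⌈p·2^n⌉`. For `c` uniform on `{0, …, 2^t − 1}`, the probability `q` of
the event `c·2^{n−t} ≤ s` satisfies `s/2^n ≤ q ≤ (1+ε)·s/2^n`. -/
theorem stmt_5 (n t : ℕ) (hn : 1 ≤ n) (p ε : ℝ)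
    (hplb : 1 / 2 ^ n ≤ p) (hpub : p ≤ 1 / 2) (hε : 0 < ε)
    (htn : t ≤ n) (ht : 1 / (p * ε) ≤ (2 : ℝ) ^ t) :
    (⌈p * 2 ^ n⌉₊ : ℝ) / 2 ^ n ≤
      ((Finset.univ.filter (fun c : Fin (2 ^ t) =>
          (c : ℕ) * 2 ^ (n - t) ≤ ⌈p * 2 ^ n⌉₊)).card : ℝ) / 2 ^ t ∧
    ((Finset.univ.filter (fun c : Fin (2 ^ t) =>
        (c : ℕ) * 2 ^ (n - t) ≤ ⌈p * 2 ^ n⌉₊)).card : ℝ) / 2 ^ t ≤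
      (1 + ε) * (⌈p * 2 ^ n⌉₊ : ℝ) / 2 ^ n :=
  stmt_5_general n t p ε hplb hpub hε htn ht
end

section
/- Let n ≥ 2, 1 ≤ l < n, and 0 < p < 1, and set p' = 2p(1−p). Let F be a random function from {0,1}^n to {0,1} on a probability space S such that the family of binary random variables (F(·)(x))_{x ∈ {0,1}^n} is 4-wise independent with P(F(·)(x) = 1) = p for every x. For α ∈ {0,1}^l, let F_α : {0,1}^{n−l} → {0,1} denote the subfunction obtained by fixing the first l input bits of F according to α. Then for any two distinct α, α' ∈ {0,1}^l, the probability that F_α = F_{α'} (as functions on {0,1}^{n−l}) is at most 1/(2^{n−l}·p'). -/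
/-! Let `A z` be the event that `F_α` and `F_{α'}` differ at `z`, and `Y` the number of `z` at
which they differ. Each `A z` only involves the two distinct inputs `(α, z)` and `(α', z)`, so it
has probability `p' = 2p(1-p)`; for `z ≠ w` the events `A z` and `A w` involve four distinct
inputs, so 4-wise independence makes them independent. Hence `E Y = m p'` and `Var Y ≤ m p'`
with `m = 2^(n-l)`, and Chebyshev's inequality gives `P(Y = 0) ≤ Var Y / (E Y)^2 ≤ 1/(m p')`. -/

open MeasureTheory

/-- `subInput n l α z` is the input in `{0,1}^n` whose first `l` bits are given
by `α` and whose remaining `n − l` bits are given by `z`. -/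
def subInput (n l : ℕ) (α : Fin l → Bool) (z : Fin (n - l) → Bool) :
    Fin n → Bool :=
  fun i =>
    if h : (i : ℕ) < l then α ⟨i, h⟩
    else z ⟨(i : ℕ) - l, by have := i.isLt; omega⟩

section

open ProbabilityTheory

def FourWiseIndep {Ω X : Type*} [MeasurableSpace Ω] (μ : Measure Ω) (F : Ω → X → Bool) :
    Prop :=
  ∀ x₁ x₂ x₃ x₄ : X, x₁ ≠ x₂ → x₁ ≠ x₃ → x₁ ≠ x₄ → x₂ ≠ x₃ → x₂ ≠ x₄ → x₃ ≠ x₄ →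
    ∀ l₁ l₂ l₃ l₄ : Bool,
      (μ {s | F s x₁ = l₁ ∧ F s x₂ = l₂ ∧ F s x₃ = l₃ ∧ F s x₄ = l₄}).toReal =
        (μ {s | F s x₁ = l₁}).toReal * (μ {s | F s x₂ = l₂}).toReal *
        (μ {s | F s x₃ = l₃}).toReal * (μ {s | F s x₄ = l₄}).toReal

variable {Ω : Type*} [MeasurableSpace Ω] {μ : Measure Ω}

theorem integral_sum_indicator_one [IsFiniteMeasure μ] {ι : Type*} (s : Finset ι)
    {B : ι → Set Ω} (hB : ∀ i, MeasurableSet (B i)) :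
    ∫ ω, (∑ i ∈ s, (B i).indicator 1) ω ∂μ = ∑ i ∈ s, μ.real (B i) := by
  simp only [Finset.sum_apply]
  rw [integral_finsetSum _ fun i _ => (integrable_const 1).indicator (hB i)]
  simp [integral_indicator_one (hB _)]

variable [IsProbabilityMeasure μ]

theorem iIndepFun_of_measure_eq_prod {ι β : Type*} [Fintype ι] [Countable β]
    [MeasurableSpace β] [MeasurableSingletonClass β] {f : ι → Ω → β}
    (hf : ∀ i, Measurable (f i))
    (h : ∀ b : ι → β, μ {ω | ∀ i, f i ω = b i} = ∏ i, μ {ω | f i ω = b i}) :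
    iIndepFun f μ := by
  rw [iIndepFun_iff_map_fun_eq_pi_map fun i => (hf i).aemeasurable]
  refine Measure.ext_of_singleton fun b => ?_
  rw [Measure.pi_singleton, Measure.map_apply (measurable_pi_lambda _ hf)
    (measurableSet_singleton b)]
  simp_rw [Measure.map_apply (hf _) (measurableSet_singleton _)]
  convert h b using 2
  · ext ω
    simp [funext_iff]
  · rfl

theorem measureReal_ne_eq_of_indepFun {X Y : Ω → Bool} (hX : Measurable X) (hY : Measurable Y)
    (hXY : IndepFun X Y μ) {p : ℝ} (hXp : μ.real {ω | X ω = true} = p)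
    (hYp : μ.real {ω | Y ω = true} = p) :
    μ.real {ω | X ω ≠ Y ω} = 2 * p * (1 - p) := by
  have hprod : ∀ a b : Bool, μ.real ({ω | X ω = a} ∩ {ω | Y ω = b}) =
      μ.real {ω | X ω = a} * μ.real {ω | Y ω = b} := by
    intro a b
    simp only [measureReal_def, ← ENNReal.toReal_mul]
    exact congrArg _ (hXY.measure_inter_preimage_eq_mul _ _
      (measurableSet_singleton a) (measurableSet_singleton b))
  have hfalse : ∀ {Z : Ω → Bool}, Measurable Z → μ.real {ω | Z ω = true} = p →
      μ.real {ω | Z ω = false} = 1 - p := by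
    intro Z hZ hZp
    have hm : MeasurableSet {ω | Z ω = true} := hZ (measurableSet_singleton true)
    rw [← hZp, ← probReal_compl_eq_one_sub hm]
    congr 1
    ext ω
    simp
  have hsplit : {ω | X ω ≠ Y ω} =
      ({ω | X ω = true} ∩ {ω | Y ω = false}) ∪ ({ω | X ω = false} ∩ {ω | Y ω = true}) := by
    ext ω
    simp only [Set.mem_ofPred_eq, Set.mem_union, Set.mem_inter_iff]
    cases X ω <;> cases Y ω <;> simp
  rw [hsplit, measureReal_union, hprod, hprod, hXp, hYp, hfalse hX hXp, hfalse hY hYp]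
  · ring
  · exact Set.disjoint_left.mpr fun ω h₁ h₂ => by simp_all
  · exact (hX (measurableSet_singleton _)).inter (hY (measurableSet_singleton _))

theorem measureReal_iInter_compl_le_of_pairwise {ι : Type*} [Fintype ι] [Nonempty ι]
    {A : ι → Set Ω} (hA : ∀ i, MeasurableSet (A i)) {q : ℝ} (hq : 0 < q)
    (hAq : ∀ i, μ.real (A i) = q) (hpair : Pairwise fun i j => μ.real (A i ∩ A j) ≤ q ^ 2) :
    μ.real (⋂ i, (A i)ᶜ) ≤ 1 / (Fintype.card ι * q) := by
  classical
  set m : ℝ := (Fintype.card ι : ℝ)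
  have hmq : 0 < m * q := mul_pos (Nat.cast_pos.mpr Fintype.card_pos) hq
  set Y : Ω → ℝ := ∑ i, (A i).indicator 1
  have hY : MemLp Y 2 μ :=
    memLp_finsetSum' _ fun i _ => (memLp_const 1).indicator (hA i)
  have hmean : μ[Y] = m * q :=
    (integral_sum_indicator_one _ hA).trans (by simp [hAq, m])
  have hsq : μ[Y ^ 2] ≤ m * q + (m * q) ^ 2 := by
    have hY2 : Y ^ 2 = ∑ i, ∑ j, (A i ∩ A j).indicator 1 := by
      simp only [Y, sq, Finset.sum_mul_sum, Set.inter_indicator_one]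
    have hdiag : ∀ i j, μ.real (A i ∩ A j) ≤ (if i = j then q else 0) + q ^ 2 := by
      intro i j
      rcases eq_or_ne i j with rfl | hij
      · simp [hAq, sq_nonneg]
      · simpa [hij] using hpair hij
    calc μ[Y ^ 2] = ∑ i, ∑ j, μ.real (A i ∩ A j) := by
          rw [hY2, ← Fintype.sum_prod_type',
            integral_sum_indicator_one (B := fun ij : ι × ι => A ij.1 ∩ A ij.2) _
              fun ij => (hA ij.1).inter (hA ij.2)]
          exact Fintype.sum_prod_type' fun i j => μ.real (A i ∩ A j)
      _ ≤ ∑ i : ι, ∑ j : ι, ((if i = j then q else 0) + q ^ 2) := by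
          gcongr with i _ j _
          exact hdiag i j
      _ = m * q + (m * q) ^ 2 := by simp [Finset.sum_add_distrib, m]; ring
  have hvar : variance Y μ ≤ m * q := by
    rw [variance_eq_sub hY, hmean]; linarith
  have hsub : (⋂ i, (A i)ᶜ) ⊆ {ω | m * q ≤ |Y ω - μ[Y]|} := by
    intro ω hω
    have hY0 : Y ω = 0 := by
      simp only [Y, Finset.sum_apply]
      exact Finset.sum_eq_zero fun i _ => Set.indicator_of_notMem (Set.mem_iInter.mp hω i) _
    simp [hY0, hmean, abs_of_pos hmq]
  calc μ.real (⋂ i, (A i)ᶜ) ≤ variance Y μ / (m * q) ^ 2 := by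
        refine ENNReal.toReal_le_of_le_ofReal
          (div_nonneg (variance_nonneg _ _) (sq_nonneg _)) ?_
        exact (measure_mono hsub).trans (meas_ge_le_variance_div_sq hY hmq)
    _ ≤ m * q / (m * q) ^ 2 := by gcongr
    _ = 1 / (m * q) := by field_simp

namespace FourWiseIndep

variable {X : Type*} {F : Ω → X → Bool} (hmeas : ∀ x, Measurable (fun s => F s x))
  (hind : FourWiseIndep μ F) {x₁ x₂ x₃ x₄ : X} (h₁₂ : x₁ ≠ x₂) (h₁₃ : x₁ ≠ x₃)
  (h₁₄ : x₁ ≠ x₄) (h₂₃ : x₂ ≠ x₃) (h₂₄ : x₂ ≠ x₄) (h₃₄ : x₃ ≠ x₄)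
include hmeas hind h₁₂ h₁₃ h₁₄ h₂₃ h₂₄ h₃₄

theorem iIndepFun : iIndepFun (fun i s => F s (![x₁, x₂, x₃, x₄] i)) μ := by
  refine iIndepFun_of_measure_eq_prod (fun i => hmeas _) fun b => ?_
  have h := hind x₁ x₂ x₃ x₄ h₁₂ h₁₃ h₁₄ h₂₃ h₂₄ h₃₄ (b 0) (b 1) (b 2) (b 3)
  simp only [← ENNReal.toReal_mul] at h
  rw [ENNReal.toReal_eq_toReal_iff' (measure_ne_top _ _)
    (by simp [ENNReal.mul_eq_top, measure_ne_top])] at h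
  simpa [Fin.forall_fin_succ, Fin.prod_univ_four] using h

theorem measureReal_ne {p : ℝ} (hbias : ∀ x, μ.real {s | F s x = true} = p) :
    μ.real {s | F s x₁ ≠ F s x₂} = 2 * p * (1 - p) :=
  measureReal_ne_eq_of_indepFun (hmeas _) (hmeas _)
    ((hind.iIndepFun hmeas h₁₂ h₁₃ h₁₄ h₂₃ h₂₄ h₃₄).indepFun (i := 0) (j := 1) (by decide))
    (hbias _) (hbias _)

theorem measureReal_ne_inter_ne {p : ℝ} (hbias : ∀ x, μ.real {s | F s x = true} = p) :
    μ.real ({s | F s x₁ ≠ F s x₂} ∩ {s | F s x₃ ≠ F s x₄}) = (2 * p * (1 - p)) ^ 2 := by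
  have hpairs := (hind.iIndepFun hmeas h₁₂ h₁₃ h₁₄ h₂₃ h₂₄ h₃₄).indepFun_prodMk_prodMk
    (fun i => hmeas _) 0 1 2 3 (by decide) (by decide) (by decide) (by decide)
  have hdiag : MeasurableSet {b : Bool × Bool | b.1 ≠ b.2} := (Set.toFinite _).measurableSet
  have hmul : μ ({s | F s x₁ ≠ F s x₂} ∩ {s | F s x₃ ≠ F s x₄}) =
      μ {s | F s x₁ ≠ F s x₂} * μ {s | F s x₃ ≠ F s x₄} :=
    hpairs.measure_inter_preimage_eq_mul _ _ hdiag hdiag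
  rw [measureReal_def, hmul, ENNReal.toReal_mul, ← measureReal_def, ← measureReal_def, sq,
    hind.measureReal_ne hmeas h₁₂ h₁₃ h₁₄ h₂₃ h₂₄ h₃₄ hbias,
    hind.measureReal_ne hmeas h₃₄ h₁₃.symm h₂₃.symm h₁₄.symm h₂₄.symm h₁₂ hbias]

end FourWiseIndep

end

theorem subInput_eq_subInput_iff {n l : ℕ} (hln : l ≤ n) {α β : Fin l → Bool}
    {z w : Fin (n - l) → Bool} : subInput n l α z = subInput n l β w ↔ α = β ∧ z = w := by
  refine ⟨fun h => ⟨funext fun i => ?_, funext fun j => ?_⟩, fun h => h.1 ▸ h.2 ▸ rfl⟩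
  · simpa [subInput] using congrFun h ⟨i, i.isLt.trans_le hln⟩
  · have hj : ¬ l + (j : ℕ) < l := by omega
    simpa [subInput, hj] using congrFun h ⟨l + j, by omega⟩

theorem subInput_pairwise_ne {n l : ℕ} (hln : l ≤ n) {α α' : Fin l → Bool} (hα : α ≠ α')
    {z w : Fin (n - l) → Bool} (hzw : z ≠ w) :
    subInput n l α z ≠ subInput n l α' z ∧ subInput n l α z ≠ subInput n l α w ∧
      subInput n l α z ≠ subInput n l α' w ∧ subInput n l α' z ≠ subInput n l α w ∧
      subInput n l α' z ≠ subInput n l α' w ∧ subInput n l α w ≠ subInput n l α' w := by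
  simp only [ne_eq, subInput_eq_subInput_iff hln]
  tauto

theorem stmt_8_general {Ω : Type*} [MeasurableSpace Ω] (μ : Measure Ω)
    [IsProbabilityMeasure μ]
    (n l : ℕ) (hln : l < n)
    (p : ℝ) (hp0 : 0 < p) (hp1 : p < 1)
    (F : Ω → (Fin n → Bool) → Bool)
    (hmeas : ∀ x, Measurable (fun s => F s x))
    (hbias : ∀ x, (μ {s | F s x = true}).toReal = p)
    (hind : ∀ x₁ x₂ x₃ x₄ : Fin n → Bool,
      x₁ ≠ x₂ → x₁ ≠ x₃ → x₁ ≠ x₄ → x₂ ≠ x₃ → x₂ ≠ x₄ → x₃ ≠ x₄ →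
      ∀ l₁ l₂ l₃ l₄ : Bool,
        (μ {s | F s x₁ = l₁ ∧ F s x₂ = l₂ ∧ F s x₃ = l₃ ∧ F s x₄ = l₄}).toReal =
          (μ {s | F s x₁ = l₁}).toReal * (μ {s | F s x₂ = l₂}).toReal *
          (μ {s | F s x₃ = l₃}).toReal * (μ {s | F s x₄ = l₄}).toReal)
    (α α' : Fin l → Bool) (hαα' : α ≠ α') :
    (μ {s | ∀ z : Fin (n - l) → Bool,
        F s (subInput n l α z) = F s (subInput n l α' z)}).toReal ≤
      1 / (2 ^ (n - l) * (2 * p * (1 - p))) := by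
  have hind : FourWiseIndep μ F := hind
  set A : (Fin (n - l) → Bool) → Set Ω :=
    fun z => {s | F s (subInput n l α z) ≠ F s (subInput n l α' z)}
  have hA : ∀ z, MeasurableSet (A z) :=
    fun z => (measurableSet_eq_fun (hmeas _) (hmeas _)).compl
  have hAq : ∀ z, μ.real (A z) = 2 * p * (1 - p) := fun z => by
    have : Nonempty (Fin (n - l)) := ⟨⟨0, by omega⟩⟩
    obtain ⟨w, hw⟩ := exists_ne z
    obtain ⟨h₁₂, h₁₃, h₁₄, h₂₃, h₂₄, h₃₄⟩ := subInput_pairwise_ne hln.le hαα' hw.symm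
    exact hind.measureReal_ne hmeas h₁₂ h₁₃ h₁₄ h₂₃ h₂₄ h₃₄ hbias
  have hpair : Pairwise fun z w => μ.real (A z ∩ A w) ≤ (2 * p * (1 - p)) ^ 2 := by
    intro z w hzw
    obtain ⟨h₁₂, h₁₃, h₁₄, h₂₃, h₂₄, h₃₄⟩ := subInput_pairwise_ne hln.le hαα' hzw
    exact (hind.measureReal_ne_inter_ne hmeas h₁₂ h₁₃ h₁₄ h₂₃ h₂₄ h₃₄ hbias).le
  have hq : 0 < 2 * p * (1 - p) := by have := sub_pos.mpr hp1; positivity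
  have hevent : {s | ∀ z, F s (subInput n l α z) = F s (subInput n l α' z)} = ⋂ z, (A z)ᶜ := by
    ext s; simp [A]
  rw [hevent, ← measureReal_def]
  simpa [Fintype.card_fun] using measureReal_iInter_compl_le_of_pairwise hA hq hAq hpair

/-- For a random function `F : {0,1}^n → {0,1}` whose values are
4-wise independent with one-probability `p`, and distinct `α, α' ∈ {0,1}^l`,
the probability that the subfunctions `F_α` and `F_{α'}` coincide is at most
`1/(2^{n−l}·p')` with `p' = 2p(1−p)`. -/
theorem stmt_8 {Ω : Type*} [MeasurableSpace Ω] (μ : Measure Ω)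
    [IsProbabilityMeasure μ]
    (n l : ℕ) (hn : 2 ≤ n) (hl : 1 ≤ l) (hln : l < n)
    (p : ℝ) (hp0 : 0 < p) (hp1 : p < 1)
    (F : Ω → (Fin n → Bool) → Bool)
    (hmeas : ∀ x, Measurable (fun s => F s x))
    (hbias : ∀ x, (μ {s | F s x = true}).toReal = p)
    (hind : ∀ x₁ x₂ x₃ x₄ : Fin n → Bool,
      x₁ ≠ x₂ → x₁ ≠ x₃ → x₁ ≠ x₄ → x₂ ≠ x₃ → x₂ ≠ x₄ → x₃ ≠ x₄ →
      ∀ l₁ l₂ l₃ l₄ : Bool,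
        (μ {s | F s x₁ = l₁ ∧ F s x₂ = l₂ ∧ F s x₃ = l₃ ∧ F s x₄ = l₄}).toReal =
          (μ {s | F s x₁ = l₁}).toReal * (μ {s | F s x₂ = l₂}).toReal *
          (μ {s | F s x₃ = l₃}).toReal * (μ {s | F s x₄ = l₄}).toReal)
    (α α' : Fin l → Bool) (hαα' : α ≠ α') :
    (μ {s | ∀ z : Fin (n - l) → Bool,
        F s (subInput n l α z) = F s (subInput n l α' z)}).toReal ≤
      1 / (2 ^ (n - l) * (2 * p * (1 - p))) :=
  stmt_8_general μ n l hln p hp0 hp1 F hmeas hbias hind α α' hαα'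
end

section
/- Let n ≥ 2, 1 ≤ l < n, and 0 < p < 1, and set p' = 2p(1−p). Let F be a random function from {0,1}^n to {0,1} on a probability space S such that the family (F(·)(x))_{x ∈ {0,1}^n} is 4-wise independent with P(F(·)(x) = 1) = p for every x. For α ∈ {0,1}^l, let F_α : {0,1}^{n−l} → {0,1} denote the subfunction obtained by fixing the first l input bits of F according to α. Then the expected number of unordered pairs {α, α'} of distinct elements of {0,1}^l with F_α = F_{α'} is at most 2^{2l−1}/(2^{n−l}·p'). -/
/-!
For `α ≠ α'` the events `E z = {F (α, z) = F (α', z)}`, `z ∈ {0,1}^(n-l)`, involve `2 M` distinct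
points, `M = 2^(n-l)`. By four-wise independence each `E z` has probability `q = p² + (1-p)²` and
any two of them are independent, so the number `T` of events `E z` that occur has mean `M q` and
variance `M q (1 - q)`. The subfunctions `F_α` and `F_α'` agree exactly when `T = M`, which by
Chebyshev's inequality has probability at most `q / (M (1 - q)) ≤ 1 / (M p')`, since `1 - q = p'`.
Summing over the fewer than `2^(2l)` ordered pairs `(α, α')` gives the bound.
-/

open MeasureTheory

open Finset Function

lemma indicator_sub_mul_indicator_sub {Ω : Type*} (A B : Set Ω) (a b : ℝ) (s : Ω) :
    (A.indicator 1 s - a) * (B.indicator 1 s - b) =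
      (A ∩ B).indicator 1 s - b * A.indicator 1 s - a * B.indicator 1 s + a * b := by
  rw [Set.inter_indicator_one, Pi.mul_apply]
  ring

section Indicators

variable {Ω : Type*} [MeasurableSpace Ω] {μ : Measure Ω}

lemma integrable_indicator_one [IsFiniteMeasure μ] {C : Set Ω} (hC : MeasurableSet C) :
    Integrable (C.indicator (1 : Ω → ℝ)) μ :=
  (integrable_const 1).indicator hC

lemma integrable_indicator_sub_mul_indicator_sub [IsFiniteMeasure μ] {A B : Set Ω}
    (hA : MeasurableSet A) (hB : MeasurableSet B) (a b : ℝ) :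
    Integrable (fun s => (A.indicator (1 : Ω → ℝ) s - a) * (B.indicator 1 s - b)) μ := by
  simp_rw [indicator_sub_mul_indicator_sub]
  exact (((integrable_indicator_one (hA.inter hB)).sub
    ((integrable_indicator_one hA).const_mul b)).sub
      ((integrable_indicator_one hB).const_mul a)).add (integrable_const _)

lemma integral_indicator_sub_mul_indicator_sub [IsProbabilityMeasure μ] {A B : Set Ω}
    (hA : MeasurableSet A) (hB : MeasurableSet B) (a b : ℝ) :
    ∫ s, (A.indicator 1 s - a) * (B.indicator 1 s - b) ∂μ =
      μ.real (A ∩ B) - b * μ.real A - a * μ.real B + a * b := by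
  have hAB := integrable_indicator_one (μ := μ) (hA.inter hB)
  have hAb := (integrable_indicator_one (μ := μ) hA).const_mul b
  have hBa := (integrable_indicator_one (μ := μ) hB).const_mul a
  have h₁ : Integrable (fun s => (A ∩ B).indicator (1 : Ω → ℝ) s - b * A.indicator 1 s) μ :=
    hAB.sub hAb
  have h₂ : Integrable (fun s => (A ∩ B).indicator (1 : Ω → ℝ) s - b * A.indicator 1 s -
      a * B.indicator 1 s) μ := h₁.sub hBa
  simp_rw [indicator_sub_mul_indicator_sub]
  rw [integral_add h₂ (integrable_const _), integral_sub h₁ hBa, integral_sub hAB hAb,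
    integral_const_mul, integral_const_mul, integral_indicator_one (hA.inter hB),
    integral_indicator_one hA, integral_indicator_one hB, integral_const, probReal_univ,
    one_smul]

lemma integral_card_filter [IsFiniteMeasure μ] {ι : Type*} (S : Finset ι) (P : Ω → ι → Prop)
    [∀ s i, Decidable (P s i)] (hP : ∀ i ∈ S, MeasurableSet {s | P s i}) :
    ∫ s, ((S.filter (P s)).card : ℝ) ∂μ = ∑ i ∈ S, μ.real {s | P s i} := by
  have hcard : ∀ s, ((S.filter (P s)).card : ℝ) = ∑ i ∈ S, {s | P s i}.indicator 1 s := by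
    intro s
    simp only [card_filter, Nat.cast_sum, Nat.cast_ite, Nat.cast_one, Nat.cast_zero,
      Set.indicator_apply, Set.mem_ofPred_eq, Pi.one_apply]
  simp_rw [hcard]
  rw [integral_finsetSum _ fun i hi => integrable_indicator_one (hP i hi)]
  exact sum_congr rfl fun i hi => integral_indicator_one (hP i hi)

theorem measureReal_iInter_le_of_pairwise_indep [IsProbabilityMeasure μ] {ι : Type*} [Fintype ι]
    [Nonempty ι] {A : ι → Set Ω} (hA : ∀ i, MeasurableSet (A i)) {q : ℝ} (hq : q < 1)
    (h1 : ∀ i, μ.real (A i) = q) (h2 : Pairwise fun i j => μ.real (A i ∩ A j) = q ^ 2) :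
    μ.real (⋂ i, A i) ≤ q / (Fintype.card ι * (1 - q)) := by
  classical
  set M : ℝ := (Fintype.card ι : ℝ)
  -- `g = T - M q`, where `T` counts the events that occur: Markov's inequality for `g ^ 2`
  set g : Ω → ℝ := fun s => ∑ i, ((A i).indicator 1 s - q)
  have hg_sq : ∀ s,
      g s ^ 2 = ∑ i, ∑ j, ((A i).indicator 1 s - q) * ((A j).indicator 1 s - q) :=
    fun s => by rw [sq, sum_mul_sum]
  have hint : ∀ i j, Integrable
      (fun s => ((A i).indicator (1 : Ω → ℝ) s - q) * ((A j).indicator 1 s - q)) μ :=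
    fun i j => integrable_indicator_sub_mul_indicator_sub (hA i) (hA j) q q
  have hcov : ∀ i j, ∫ s, ((A i).indicator 1 s - q) * ((A j).indicator 1 s - q) ∂μ =
      if i = j then q * (1 - q) else 0 := by
    intro i j
    rw [integral_indicator_sub_mul_indicator_sub (hA i) (hA j)]
    split_ifs with hij
    · rw [hij, Set.inter_self, h1]; ring
    · rw [h2 hij, h1, h1]; ring
  have hvar : ∫ s, g s ^ 2 ∂μ = M * (q * (1 - q)) := by
    simp_rw [hg_sq]
    rw [integral_finsetSum _ fun i _ => integrable_finsetSum _ fun j _ => hint i j]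
    simp_rw [integral_finsetSum _ fun j _ => hint _ j, hcov, sum_ite_eq, if_pos (mem_univ _),
      sum_const, card_univ, nsmul_eq_mul]
    rfl
  have hg_int : Integrable (fun s => g s ^ 2) μ := by
    simp_rw [hg_sq]
    exact integrable_finsetSum _ fun i _ => integrable_finsetSum _ fun j _ => hint i j
  have hg_on : ⋂ i, A i ⊆ {s | (M * (1 - q)) ^ 2 ≤ g s ^ 2} := by
    intro s hs
    have : g s = M * (1 - q) := by
      simp [g, M, Set.mem_iInter.mp hs, mul_sub]
    simp [this]
  have markov := mul_meas_ge_le_integral_of_nonneg (ae_of_all _ fun s => sq_nonneg (g s)) hg_int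
    ((M * (1 - q)) ^ 2)
  have key : (M * (1 - q)) ^ 2 * μ.real (⋂ i, A i) ≤ M * (q * (1 - q)) :=
    (mul_le_mul_of_nonneg_left (measureReal_mono hg_on) (sq_nonneg _)).trans (hvar ▸ markov)
  have hMq : 0 < M * (1 - q) := mul_pos (by positivity) (by linarith)
  rw [le_div_iff₀ hMq]
  nlinarith

end Indicators

lemma exists_pair_ne_of_four_le_card {X : Type*} [Fintype X] (hX : 4 ≤ Fintype.card X) (x y : X) :
    ∃ u v : X, x ≠ u ∧ x ≠ v ∧ y ≠ u ∧ y ≠ v ∧ u ≠ v := by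
  classical
  obtain ⟨u, -, hu⟩ := exists_mem_notMem_of_card_lt_card (s := {x, y}) (t := univ)
    (card_le_two.trans_lt (by rw [card_univ]; omega))
  obtain ⟨v, -, hv⟩ := exists_mem_notMem_of_card_lt_card (s := {x, y, u}) (t := univ)
    (card_le_three.trans_lt (by rw [card_univ]; omega))
  simp only [mem_insert, mem_singleton, not_or] at hu hv
  exact ⟨u, v, Ne.symm hu.1, Ne.symm hv.1, Ne.symm hu.2, Ne.symm hv.2.1, Ne.symm hv.2.2⟩

section FourWise

variable {Ω X : Type*} [MeasurableSpace Ω] {μ : Measure Ω} [IsProbabilityMeasure μ]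
  {F : Ω → X → Bool} {p : ℝ}

def IsFourWiseIndependent (μ : Measure Ω) (F : Ω → X → Bool) : Prop :=
  ∀ x₁ x₂ x₃ x₄ : X, x₁ ≠ x₂ → x₁ ≠ x₃ → x₁ ≠ x₄ → x₂ ≠ x₃ → x₂ ≠ x₄ → x₃ ≠ x₄ →
    ∀ l₁ l₂ l₃ l₄ : Bool,
      μ.real {s | F s x₁ = l₁ ∧ F s x₂ = l₂ ∧ F s x₃ = l₃ ∧ F s x₄ = l₄} =
        μ.real {s | F s x₁ = l₁} * μ.real {s | F s x₂ = l₂} *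
        μ.real {s | F s x₃ = l₃} * μ.real {s | F s x₄ = l₄}

def bernoulliWeight (p : ℝ) (b : Bool) : ℝ := if b then p else 1 - p

lemma measureReal_eval_eq (hmeas : ∀ x, Measurable fun s => F s x)
    (hbias : ∀ x, μ.real {s | F s x = true} = p) (x : X) (b : Bool) :
    μ.real {s | F s x = b} = bernoulliWeight p b := by
  cases b
  · have hfalse : {s | F s x = false} = {s | F s x = true}ᶜ := by ext; simp
    rw [hfalse, probReal_compl_eq_one_sub (s := {s | F s x = true})
      (hmeas x (measurableSet_singleton true)), hbias]
    rfl
  · exact hbias x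

lemma measureReal_pair_mem_and_pair_mem (hmeas : ∀ x, Measurable fun s => F s x)
    (hbias : ∀ x, μ.real {s | F s x = true} = p) (hind : IsFourWiseIndependent μ F)
    {x₁ x₂ x₃ x₄ : X} (h₁₂ : x₁ ≠ x₂) (h₁₃ : x₁ ≠ x₃) (h₁₄ : x₁ ≠ x₄) (h₂₃ : x₂ ≠ x₃)
    (h₂₄ : x₂ ≠ x₄) (h₃₄ : x₃ ≠ x₄) (S T : Finset (Bool × Bool)) :
    μ.real {s | (F s x₁, F s x₂) ∈ S ∧ (F s x₃, F s x₄) ∈ T} =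
      (∑ u ∈ S, bernoulliWeight p u.1 * bernoulliWeight p u.2) *
        ∑ v ∈ T, bernoulliWeight p v.1 * bernoulliWeight p v.2 := by
  set f : Ω → (Bool × Bool) × (Bool × Bool) :=
    fun s => ((F s x₁, F s x₂), (F s x₃, F s x₄))
  have hf : Measurable f :=
    ((hmeas x₁).prodMk (hmeas x₂)).prodMk ((hmeas x₃).prodMk (hmeas x₄))
  have hset : {s | (F s x₁, F s x₂) ∈ S ∧ (F s x₃, F s x₄) ∈ T} = f ⁻¹' ↑(S ×ˢ T) := by
    ext; simp [f]
  rw [hset, ← sum_measureReal_preimage_singleton _ fun _ _ => hf (measurableSet_singleton _),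
    sum_product, sum_mul_sum]
  refine sum_congr rfl fun u _ => sum_congr rfl fun v _ => ?_
  have hfiber : f ⁻¹' {(u, v)} =
      {s | F s x₁ = u.1 ∧ F s x₂ = u.2 ∧ F s x₃ = v.1 ∧ F s x₄ = v.2} := by
    ext; simp [f, Prod.ext_iff, and_assoc]
  rw [hfiber, hind x₁ x₂ x₃ x₄ h₁₂ h₁₃ h₁₄ h₂₃ h₂₄ h₃₄, measureReal_eval_eq hmeas hbias,
    measureReal_eval_eq hmeas hbias, measureReal_eval_eq hmeas hbias,
    measureReal_eval_eq hmeas hbias]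
  ring

lemma sum_bernoulliWeight_diag (p : ℝ) :
    ∑ u ∈ univ.filter (fun u : Bool × Bool => u.1 = u.2),
      bernoulliWeight p u.1 * bernoulliWeight p u.2 = p ^ 2 + (1 - p) ^ 2 := by
  simp [sum_filter, Fintype.sum_prod_type, bernoulliWeight]
  ring

lemma sum_bernoulliWeight_univ (p : ℝ) :
    ∑ u : Bool × Bool, bernoulliWeight p u.1 * bernoulliWeight p u.2 = 1 := by
  simp [Fintype.sum_prod_type, bernoulliWeight]
  ring

lemma measureReal_agree_and_agree (hmeas : ∀ x, Measurable fun s => F s x)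
    (hbias : ∀ x, μ.real {s | F s x = true} = p) (hind : IsFourWiseIndependent μ F)
    {x₁ x₂ x₃ x₄ : X} (h₁₂ : x₁ ≠ x₂) (h₁₃ : x₁ ≠ x₃) (h₁₄ : x₁ ≠ x₄) (h₂₃ : x₂ ≠ x₃)
    (h₂₄ : x₂ ≠ x₄) (h₃₄ : x₃ ≠ x₄) :
    μ.real {s | F s x₁ = F s x₂ ∧ F s x₃ = F s x₄} = (p ^ 2 + (1 - p) ^ 2) ^ 2 := by
  have := measureReal_pair_mem_and_pair_mem hmeas hbias hind h₁₂ h₁₃ h₁₄ h₂₃ h₂₄ h₃₄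
    (univ.filter fun u => u.1 = u.2) (univ.filter fun u => u.1 = u.2)
  simpa [sum_bernoulliWeight_diag, sq] using this

lemma measureReal_agree (hmeas : ∀ x, Measurable fun s => F s x)
    (hbias : ∀ x, μ.real {s | F s x = true} = p) (hind : IsFourWiseIndependent μ F)
    {x₁ x₂ x₃ x₄ : X} (h₁₂ : x₁ ≠ x₂) (h₁₃ : x₁ ≠ x₃) (h₁₄ : x₁ ≠ x₄) (h₂₃ : x₂ ≠ x₃)
    (h₂₄ : x₂ ≠ x₄) (h₃₄ : x₃ ≠ x₄) :
    μ.real {s | F s x₁ = F s x₂} = p ^ 2 + (1 - p) ^ 2 := by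
  have := measureReal_pair_mem_and_pair_mem hmeas hbias hind h₁₂ h₁₃ h₁₄ h₂₃ h₂₄ h₃₄
    (univ.filter fun u => u.1 = u.2) univ
  simpa [sum_bernoulliWeight_diag, sum_bernoulliWeight_univ] using this

theorem measureReal_forall_agree_le [Fintype X] (hX : 4 ≤ Fintype.card X)
    (hmeas : ∀ x, Measurable fun s => F s x) (hbias : ∀ x, μ.real {s | F s x = true} = p)
    (hind : IsFourWiseIndependent μ F) (hp0 : 0 < p) (hp1 : p < 1)
    {Z : Type*} [Fintype Z] [Nonempty Z] {a b : Z → X} (ha : Injective a) (hb : Injective b)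
    (hab : ∀ z z', a z ≠ b z') :
    μ.real {s | ∀ z, F s (a z) = F s (b z)} ≤ 1 / (Fintype.card Z * (2 * p * (1 - p))) := by
  set q := p ^ 2 + (1 - p) ^ 2
  have h1q : 1 - q = 2 * p * (1 - p) := by ring
  have hq : q < 1 := by nlinarith
  have hevent : ∀ z, MeasurableSet {s | F s (a z) = F s (b z)} :=
    fun z => measurableSet_eq_fun (hmeas _) (hmeas _)
  rw [Set.ofPred_forall, ← h1q]
  refine (measureReal_iInter_le_of_pairwise_indep hevent hq (fun z => ?_)
    (fun z z' hzz' => ?_)).trans ?_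
  · obtain ⟨u, v, hau, hav, hbu, hbv, huv⟩ := exists_pair_ne_of_four_le_card hX (a z) (b z)
    exact measureReal_agree hmeas hbias hind (hab z z) hau hav hbu hbv huv
  · show μ.real ({s | F s (a z) = F s (b z)} ∩ {s | F s (a z') = F s (b z')}) = q ^ 2
    rw [← Set.ofPred_and]
    exact measureReal_agree_and_agree hmeas hbias hind (hab z z) (ha.ne hzz') (hab z z')
      (fun h => hab z' z h.symm) (hb.ne hzz') (hab z' z')
  · gcongr

end FourWise

lemma subInput_inj {n l : ℕ} (hln : l ≤ n) {α α' : Fin l → Bool} {z z' : Fin (n - l) → Bool} :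
    subInput n l α z = subInput n l α' z' ↔ α = α' ∧ z = z' := by
  refine ⟨fun h => ⟨funext fun i => ?_, funext fun j => ?_⟩, fun ⟨hα, hz⟩ => hα ▸ hz ▸ rfl⟩
  · simpa [subInput] using congrFun h ⟨i, i.isLt.trans_le hln⟩
  · have hj : l + (j : ℕ) < n := by omega
    simpa [subInput] using congrFun h ⟨l + j, hj⟩

theorem measureReal_subInput_agree_le {Ω : Type*} [MeasurableSpace Ω] {μ : Measure Ω}
    [IsProbabilityMeasure μ] {n l : ℕ} (hn : 2 ≤ n) (hln : l ≤ n) {F : Ω → (Fin n → Bool) → Bool}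
    {p : ℝ} (hmeas : ∀ x, Measurable fun s => F s x) (hbias : ∀ x, μ.real {s | F s x = true} = p)
    (hind : IsFourWiseIndependent μ F) (hp0 : 0 < p) (hp1 : p < 1) {α α' : Fin l → Bool}
    (hα : α ≠ α') :
    μ.real {s | ∀ z, F s (subInput n l α z) = F s (subInput n l α' z)} ≤
      1 / (2 ^ (n - l) * (2 * p * (1 - p))) := by
  have hX : 4 ≤ Fintype.card (Fin n → Bool) := by
    simpa using Nat.pow_le_pow_right two_pos hn
  have := measureReal_forall_agree_le hX hmeas hbias hind hp0 hp1
    (fun z z' h => ((subInput_inj hln).1 h).2) (fun z z' h => ((subInput_inj hln).1 h).2)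
    (fun z z' h => hα ((subInput_inj hln).1 h).1)
  simpa only [Fintype.card_fun, Fintype.card_bool, Fintype.card_fin, Nat.cast_pow,
    Nat.cast_ofNat] using this

theorem stmt_9_general {Ω : Type*} [MeasurableSpace Ω] (μ : Measure Ω)
    [IsProbabilityMeasure μ]
    (n l : ℕ) (hn : 2 ≤ n) (hln : l < n)
    (p : ℝ) (hp0 : 0 < p) (hp1 : p < 1)
    (F : Ω → (Fin n → Bool) → Bool)
    (hmeas : ∀ x, Measurable (fun s => F s x))
    (hbias : ∀ x, (μ {s | F s x = true}).toReal = p)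
    (hind : ∀ x₁ x₂ x₃ x₄ : Fin n → Bool,
      x₁ ≠ x₂ → x₁ ≠ x₃ → x₁ ≠ x₄ → x₂ ≠ x₃ → x₂ ≠ x₄ → x₃ ≠ x₄ →
      ∀ l₁ l₂ l₃ l₄ : Bool,
        (μ {s | F s x₁ = l₁ ∧ F s x₂ = l₂ ∧ F s x₃ = l₃ ∧ F s x₄ = l₄}).toReal =
          (μ {s | F s x₁ = l₁}).toReal * (μ {s | F s x₂ = l₂}).toReal *
          (μ {s | F s x₃ = l₃}).toReal * (μ {s | F s x₄ = l₄}).toReal) :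
    ∫ s, (((Finset.univ.offDiag.filter
        (fun q : (Fin l → Bool) × (Fin l → Bool) =>
          ∀ z, F s (subInput n l q.1 z) = F s (subInput n l q.2 z))).card : ℝ)
        / 2) ∂μ ≤
      2 ^ (2 * l - 1) / (2 ^ (n - l) * (2 * p * (1 - p))) := by
  set B : ℝ := 1 / (2 ^ (n - l) * (2 * p * (1 - p)))
  have hB : 0 ≤ B := by
    have : 0 < 1 - p := sub_pos.2 hp1
    positivity
  set pairs := (univ : Finset (Fin l → Bool)).offDiag
  have hcard : (pairs.card : ℝ) ≤ 2 * 2 ^ (2 * l - 1) := by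
    have : pairs.card ≤ 2 * 2 ^ (2 * l - 1) := by
      rw [offDiag_card, card_univ, ← pow_succ']
      simp only [Fintype.card_fun, Fintype.card_bool, Fintype.card_fin, ← pow_add]
      exact (Nat.sub_le _ _).trans (Nat.pow_le_pow_right two_pos (by omega))
    exact_mod_cast this
  have hsum : ∑ q ∈ pairs,
      μ.real {s | ∀ z, F s (subInput n l q.1 z) = F s (subInput n l q.2 z)} ≤ pairs.card * B := by
    simpa only [nsmul_eq_mul] using sum_le_card_nsmul _ _ _ fun q hq =>
      measureReal_subInput_agree_le hn hln.le hmeas hbias hind hp0 hp1 (mem_offDiag.1 hq).2.2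
  rw [integral_div, integral_card_filter _ _ fun q _ => ?_]
  · calc _ ≤ (pairs.card * B) / 2 := by gcongr
      _ ≤ (2 * 2 ^ (2 * l - 1) * B) / 2 := by gcongr
      _ = 2 ^ (2 * l - 1) / (2 ^ (n - l) * (2 * p * (1 - p))) := by ring
  · rw [Set.ofPred_forall]
    exact MeasurableSet.iInter fun z => measurableSet_eq_fun (hmeas _) (hmeas _)

/-- For a random function `F : {0,1}^n → {0,1}` whose values are
4-wise independent with one-probability `p`, the expected number of unordered
pairs `{α, α'}` of distinct elements of `{0,1}^l` with `F_α = F_{α'}` (counted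
as half the number of ordered pairs of distinct elements) is at most
`2^{2l−1}/(2^{n−l}·p')` with `p' = 2p(1−p)`. -/
theorem stmt_9 {Ω : Type*} [MeasurableSpace Ω] (μ : Measure Ω)
    [IsProbabilityMeasure μ]
    (n l : ℕ) (hn : 2 ≤ n) (hl : 1 ≤ l) (hln : l < n)
    (p : ℝ) (hp0 : 0 < p) (hp1 : p < 1)
    (F : Ω → (Fin n → Bool) → Bool)
    (hmeas : ∀ x, Measurable (fun s => F s x))
    (hbias : ∀ x, (μ {s | F s x = true}).toReal = p)
    (hind : ∀ x₁ x₂ x₃ x₄ : Fin n → Bool,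
      x₁ ≠ x₂ → x₁ ≠ x₃ → x₁ ≠ x₄ → x₂ ≠ x₃ → x₂ ≠ x₄ → x₃ ≠ x₄ →
      ∀ l₁ l₂ l₃ l₄ : Bool,
        (μ {s | F s x₁ = l₁ ∧ F s x₂ = l₂ ∧ F s x₃ = l₃ ∧ F s x₄ = l₄}).toReal =
          (μ {s | F s x₁ = l₁}).toReal * (μ {s | F s x₂ = l₂}).toReal *
          (μ {s | F s x₃ = l₃}).toReal * (μ {s | F s x₄ = l₄}).toReal) :
    ∫ s, (((Finset.univ.offDiag.filter
        (fun q : (Fin l → Bool) × (Fin l → Bool) =>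
          ∀ z, F s (subInput n l q.1 z) = F s (subInput n l q.2 z))).card : ℝ)
        / 2) ∂μ ≤
      2 ^ (2 * l - 1) / (2 ^ (n - l) * (2 * p * (1 - p))) :=
  stmt_9_general μ n l hn hln p hp0 hp1 F hmeas hbias hind
end

section
/- Fix integers n ≥ 1, k ≥ 1, w ≥ 2 and a real ε with 0 < ε < 1 such that w ≥ k + n·k·(k+1)/ε. Consider the following random layered branching program of width w: choose a root ρ uniformly from {1,…,w}; for each level i ∈ {0,…,n−2}, each node u ∈ {1,…,w} and each bit b ∈ {0,1}, choose a successor σ_i(u,b) uniformly from {1,…,w}; for each node u ∈ {1,…,w} of level n−1 and each bit b ∈ {0,1}, choose an output bit τ(u,b) uniformly from {0,1}; all these choices are mutually independent. For an input a ∈ {0,1}^n, define the path v_0 = ρ, v_{i+1} = σ_i(v_i, a_i) for 0 ≤ i ≤ n−2, and the function value f(a) = τ(v_{n−1}, a_{n−1}). Then the random bits (f(a))_{a ∈ {0,1}^n} are (ε,k)-wise independent: for all pairwise distinct a_1, …, a_k ∈ {0,1}^n and all bits l_1, …, l_k ∈ {0,1}, |P(f(a_1) = l_1 ∧ … ∧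 f(a_k) = l_k) − 2^{−k}| ≤ ε. -/
/-- The node of level `i` reached in a layered branching program of width `w`
on `n` variables with successor function `σ`, root `ρ`, on input `a`. -/
def obddPath (n w : ℕ) (σ : Fin (n - 1) → Fin w → Bool → Fin w) (ρ : Fin w)
    (a : Fin n → Bool) : ℕ → Fin w
  | 0 => ρ
  | i + 1 =>
      if h : i < n - 1 then
        σ ⟨i, h⟩ (obddPath n w σ ρ a i) (a ⟨i, by omega⟩)
      else obddPath n w σ ρ a i

/-- The function computed by a layered branching program of width `w`
on `n` variables given by a root, successor functions for levels `0, …, n−2`,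
and output bits for the nodes of level `n−1`. -/
def obddEval (n w : ℕ)
    (ω : Fin w × (Fin (n - 1) → Fin w → Bool → Fin w) × (Fin w → Bool → Bool))
    (a : Fin n → Bool) : Bool :=
  if h : 1 ≤ n then
    ω.2.2 (obddPath n w ω.2.1 ω.1 a (n - 1)) (a ⟨n - 1, by omega⟩)
  else false

/-!
Condition on the event that the `k` inputs end in pairwise distinct states (node of the last
level, last input bit). On this event their outputs are `k` distinct entries of the uniform
output table, so they take the values `l` with probability exactly `2^{-k}`; hence the
probability in question is within `P(some two inputs end in the same state)` of `2^{-k}`.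
Two distinct inputs ending in the same state have paths that differ at some level and agree at
the last one, so at some level `ℓ` two distinct (node, bit) pairs are sent to the same node.
The pairs at level `ℓ` do not depend on the successor table of level `ℓ`, so this happens with
probability `1/w`, and a union bound over pairs of inputs and levels gives
`k²(n-1)/w ≤ ε`.
-/

open Finset Function

section CountingFunctions

variable {α β : Type*} [Fintype α] [DecidableEq α] [Fintype β] [DecidableEq β]

theorem card_filter_forall_apply_eq_mul_card_pow {k : ℕ} {p : Fin k → α} (hp : Injective p)
    (v : Fin k → β) :
    #{g : α → β | ∀ j, g (p j) = v j} * Fintype.card β ^ k = Fintype.card (α → β) := by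
  have hpi : ({g : α → β | ∀ j, g (p j) = v j} : Finset _) =
      Fintype.piFinset fun x => {y | ∀ j, p j = x → y = v j} := by
    ext g
    simp only [mem_filter, mem_univ, true_and, Fintype.mem_piFinset]
    exact ⟨fun h x j hj => hj ▸ h j, fun h j => h _ j rfl⟩
  have hfactor : ∀ x, #{y : β | ∀ j, p j = x → y = v j} =
      if x ∈ univ.image p then 1 else Fintype.card β := by
    intro x
    split_ifs with hx
    · obtain ⟨j, -, rfl⟩ := mem_image.mp hx
      refine card_eq_one.mpr ⟨v j, ?_⟩
      ext y
      simpa using ⟨fun h => h j rfl, fun h j' hj' => hp hj' ▸ h⟩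
    · rw [filter_true_of_mem fun y _ j (hj : p j = x) =>
        (hx (hj ▸ mem_image_of_mem p (mem_univ j))).elim,
        card_univ]
  have hpow : Fintype.card β ^ k = ∏ x ∈ univ.image p, Fintype.card β := by
    rw [prod_const, card_image_of_injective _ hp, card_univ, Fintype.card_fin]
  rw [hpi, Fintype.card_piFinset, Fintype.card_fun, ← card_univ (α := α), ← prod_const, hpow,
    ← Fintype.prod_ite_mem (univ.image p), ← prod_mul_distrib]
  refine prod_congr rfl fun x _ => ?_
  rw [hfactor]
  split_ifs <;> simp

theorem card_filter_apply_eq_apply_mul_card {a b : α} (hab : a ≠ b) :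
    #{g : α → β | g a = g b} * Fintype.card β = Fintype.card (α → β) := by
  rw [← Fintype.card_subtype, ← Fintype.card_prod]
  refine Fintype.card_congr
    { toFun := fun gc => update gc.1.1 b gc.2
      invFun := fun h => (⟨update h b (h a), by simp [hab]⟩, h b)
      left_inv := fun ⟨⟨g, hg⟩, c⟩ => by ext <;> simp [hab, hg]
      right_inv := fun h => by simp }

omit [DecidableEq β] in
theorem card_filter_uncurry {γ : Type*} [Fintype γ] [DecidableEq γ]
    (P : (α × γ → β) → Prop) [DecidablePred P] :
    #{τ : α → γ → β | P (uncurry τ)} = #{f | P f} :=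
  card_equiv (Equiv.curry α γ β).symm (by simp [Equiv.curry])

theorem card_filter_forall_uncurry_apply_eq {γ : Type*} [Fintype γ] [DecidableEq γ] {k : ℕ}
    {p : Fin k → α × γ} (hp : Injective p) (v : Fin k → Bool) :
    (#{τ : α → γ → Bool | ∀ j, uncurry τ (p j) = v j} : ℝ) =
      (1 / 2) ^ k * Fintype.card (α → γ → Bool) := by
  rw [show #{τ : α → γ → Bool | ∀ j, uncurry τ (p j) = v j} =
        #{f : α × γ → Bool | ∀ j, f (p j) = v j} from
      card_filter_uncurry fun f => ∀ j, f (p j) = v j,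
    ← Fintype.card_congr (Equiv.curry _ _ _), ← card_filter_forall_apply_eq_mul_card_pow hp v]
  push_cast [Fintype.card_bool]
  rw [mul_left_comm, ← mul_pow]
  norm_num

end CountingFunctions

section DensityBounds

variable {A B : Type*} [Fintype A] [Fintype B]

theorem card_filter_prod_eq_sum (P : A → B → Prop) [∀ a, DecidablePred (P a)] :
    #{z : A × B | P z.1 z.2} = ∑ a, #{b | P a b} := by
  simp only [card_filter, Fintype.sum_prod_type]

theorem card_filter_prod_mul_le (P : A → B → Prop) [∀ a, DecidablePred (P a)] {c : ℕ}
    (h : ∀ a, #{b | P a b} * c ≤ Fintype.card B) :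
    #{z : A × B | P z.1 z.2} * c ≤ Fintype.card (A × B) :=
  calc #{z : A × B | P z.1 z.2} * c = ∑ a, #{b | P a b} * c := by
        rw [card_filter_prod_eq_sum, sum_mul]
    _ ≤ ∑ _a : A, Fintype.card B := sum_le_sum fun a _ => h a
    _ = Fintype.card (A × B) := by simp

theorem card_filter_mul_le_of_update {ι : Type*} [Fintype ι] [DecidableEq ι] (i : ι)
    (P : (ι → B) → Prop) [DecidablePred P] {c : ℕ}
    (h : ∀ f, #{x | P (update f i x)} * c ≤ Fintype.card B) :
    #{f | P f} * c ≤ Fintype.card (ι → B) := by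
  rw [show #{f | P f} = #{z : _ × B | P ((Equiv.funSplitAt i B).symm (z.2, z.1))} from
    card_equiv ((Equiv.funSplitAt i B).trans (Equiv.prodComm _ _)) fun f => by
      simp only [mem_filter, mem_univ, true_and, Equiv.trans_apply, Equiv.prodComm_apply,
        Prod.snd_swap, Prod.fst_swap, Prod.mk.eta, Equiv.symm_apply_apply],
    Fintype.card_congr ((Equiv.funSplitAt i B).trans (Equiv.prodComm _ _))]
  refine card_filter_prod_mul_le (fun r x => P ((Equiv.funSplitAt i B).symm (x, r))) fun r => ?_
  rcases isEmpty_or_nonempty B with hB | ⟨⟨x₀⟩⟩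
  · simp
  · have hupdate : ∀ x, (Equiv.funSplitAt i B).symm (x, r) =
        update ((Equiv.funSplitAt i B).symm (x₀, r)) i x := fun x => by
      funext j
      by_cases hj : j = i
      · subst hj; simp
      · simp [hj]
    generalize (Equiv.funSplitAt i B).symm (x₀, r) = f at hupdate
    simpa only [hupdate] using h f

theorem abs_card_filter_div_sub_le [Nonempty A] [Nonempty B] (P : A → B → Prop)
    [∀ a, DecidablePred (P a)] (G : A → Prop) [DecidablePred G] {p : ℝ} (hp0 : 0 ≤ p)
    (hp1 : p ≤ 1) (hG : ∀ a, G a → (#{b | P a b} : ℝ) = p * Fintype.card B) :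
    |(#{z : A × B | P z.1 z.2} : ℝ) / (Fintype.card A * Fintype.card B) - p|
      ≤ #{a | ¬ G a} / Fintype.card A := by
  have hsection : ∀ a, |(#{b | P a b} : ℝ) - p * Fintype.card B|
      ≤ if G a then 0 else (Fintype.card B : ℝ) := by
    intro a
    split_ifs with ha
    · rw [hG a ha, sub_self, abs_zero]
    · have hle : (#{b | P a b} : ℝ) ≤ Fintype.card B := by exact_mod_cast card_le_univ _
      rw [abs_sub_le_iff]
      constructor <;> nlinarith [(#{b | P a b}).cast_nonneg (α := ℝ)]
  have hnum : |(#{z : A × B | P z.1 z.2} : ℝ) - p * (Fintype.card A * Fintype.card B)|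
      ≤ #{a | ¬ G a} * Fintype.card B := by
    calc _ = |∑ a, ((#{b | P a b} : ℝ) - p * Fintype.card B)| := by
          rw [card_filter_prod_eq_sum, sum_sub_distrib, sum_const, card_univ]; push_cast; ring_nf
      _ ≤ ∑ a, if G a then 0 else (Fintype.card B : ℝ) :=
          (abs_sum_le_sum_abs _ _).trans (sum_le_sum fun a _ => hsection a)
      _ = #{a | ¬ G a} * Fintype.card B := by
          rw [sum_ite, sum_const_zero, zero_add, sum_const, nsmul_eq_mul]
  have hA : (0 : ℝ) < Fintype.card A := by exact_mod_cast Fintype.card_pos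
  have hB : (0 : ℝ) < Fintype.card B := by exact_mod_cast Fintype.card_pos
  have hAB : (0 : ℝ) < Fintype.card A * Fintype.card B := mul_pos hA hB
  rw [div_sub' hAB.ne', abs_div, abs_of_pos hAB, div_le_div_iff₀ hAB hA, mul_comm _ p]
  calc _ ≤ (#{a | ¬ G a} * Fintype.card B : ℝ) * Fintype.card A := by gcongr
    _ = _ := by ring

end DensityBounds

section Obdd

variable {n w : ℕ}

/-- A branching program without its output bits: the root and the successor tables. -/
abbrev ObddSkeleton (n w : ℕ) : Type := Fin w × (Fin (n - 1) → Fin w → Bool → Fin w)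

def obddState (q : ObddSkeleton n w) (b : Fin n → Bool) (i : Fin n) : Fin w × Bool :=
  (obddPath n w q.2 q.1 b i, b i)

theorem obddPath_succ (σ : Fin (n - 1) → Fin w → Bool → Fin w) (ρ : Fin w) (b : Fin n → Bool)
    (i : Fin (n - 1)) :
    obddPath n w σ ρ b (i + 1) = σ i (obddPath n w σ ρ b i) (b (Fin.castLE (n.sub_le 1) i)) := by
  rw [obddPath, dif_pos i.2]
  rfl

theorem obddPath_update_of_le (σ : Fin (n - 1) → Fin w → Bool → Fin w) (ρ : Fin w)
    (b : Fin n → Bool) (ℓ : Fin (n - 1)) (x : Fin w → Bool → Fin w) {i : ℕ} (hi : i ≤ ℓ) :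
    obddPath n w (update σ ℓ x) ρ b i = obddPath n w σ ρ b i := by
  induction i with
  | zero => rfl
  | succ i ih =>
    have hne : (⟨i, by omega⟩ : Fin (n - 1)) ≠ ℓ := fun h => by rw [← h] at hi; simp at hi
    simp only [obddPath]
    split_ifs with h
    · rw [ih (by omega), update_of_ne hne]
    · exact ih (by omega)

theorem obddEval_eq_uncurry_obddState [NeZero n]
    (ω : Fin w × (Fin (n - 1) → Fin w → Bool → Fin w) × (Fin w → Bool → Bool))
    (a : Fin n → Bool) :
    obddEval n w ω a = uncurry ω.2.2 (obddState (ω.1, ω.2.1) a ⊤) := by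
  rw [obddEval, dif_pos NeZero.one_le]
  rfl

def ObddMergesAt (ℓ : Fin (n - 1)) (b b' : Fin n → Bool)
    (q : ObddSkeleton n w) : Prop :=
  obddState q b (Fin.castLE (n.sub_le 1) ℓ) ≠ obddState q b' (Fin.castLE (n.sub_le 1) ℓ) ∧
    uncurry (q.2 ℓ) (obddState q b (Fin.castLE (n.sub_le 1) ℓ)) =
      uncurry (q.2 ℓ) (obddState q b' (Fin.castLE (n.sub_le 1) ℓ))

instance (ℓ : Fin (n - 1)) (b b' : Fin n → Bool) :
    DecidablePred (ObddMergesAt (w := w) ℓ b b') :=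
  fun _ => inferInstanceAs (Decidable (_ ∧ _))

theorem exists_obddMergesAt_of_ne [NeZero n] {b b' : Fin n → Bool} (hbb' : b ≠ b')
    (q : ObddSkeleton n w)
    (hlast : obddState q b ⊤ = obddState q b' ⊤) : ∃ ℓ, ObddMergesAt ℓ b b' q := by
  obtain ⟨i, hi⟩ := Function.ne_iff.mp hbb'
  have hi_lt : (i : ℕ) < n - 1 := by
    have hi_top : i ≠ ⊤ := fun h => hi (h ▸ congrArg Prod.snd hlast)
    exact lt_of_le_of_ne (Nat.le_sub_one_of_lt i.2) fun h => hi_top (Fin.ext h)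
  set S : Finset (Fin (n - 1)) := {m | obddState q b (Fin.castLE (n.sub_le 1) m) ≠
    obddState q b' (Fin.castLE (n.sub_le 1) m)}
  have hS : S.Nonempty := ⟨⟨i, hi_lt⟩, by simp [S, obddState, Fin.castLE, hi]⟩
  -- `ℓ` is the last level at which the two states differ.
  refine ⟨S.max' hS, (mem_filter.mp (S.max'_mem hS)).2, ?_⟩
  set ℓ := S.max' hS
  have hnext : obddPath n w q.2 q.1 b (ℓ + 1) = obddPath n w q.2 q.1 b' (ℓ + 1) := by
    rcases (show (ℓ : ℕ) + 1 ≤ n - 1 from ℓ.2).lt_or_eq with h | h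
    · have hnot : (⟨ℓ + 1, h⟩ : Fin (n - 1)) ∉ S := fun hm =>
        absurd (S.le_max' _ hm) (by simp [Fin.le_def, ℓ])
      simp only [S, mem_filter, mem_univ, true_and, not_not] at hnot
      exact congrArg Prod.fst hnot
    · rw [h]
      exact congrArg Prod.fst hlast
  rw [obddPath_succ, obddPath_succ] at hnext
  exact hnext

theorem card_obddMergesAt_mul_le (ℓ : Fin (n - 1)) (b b' : Fin n → Bool) :
    #{q : ObddSkeleton n w | ObddMergesAt ℓ b b' q} * w ≤
      Fintype.card (ObddSkeleton n w) := by
  refine card_filter_prod_mul_le (fun ρ σ => ObddMergesAt ℓ b b' (ρ, σ))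
    fun ρ => card_filter_mul_le_of_update ℓ _ fun σ => ?_
  -- The states at level `ℓ` do not depend on `σ ℓ`, which is a uniform table compared at two
  -- fixed arguments.
  have hstate : ∀ x c, obddState (ρ, update σ ℓ x) c (Fin.castLE (n.sub_le 1) ℓ) =
      obddState (ρ, σ) c (Fin.castLE (n.sub_le 1) ℓ) := fun x c => by
    simp only [obddState, Fin.val_castLE, obddPath_update_of_le σ ρ c ℓ x le_rfl]
  simp only [ObddMergesAt, hstate, update_self]
  set s := obddState (ρ, σ) b (Fin.castLE (n.sub_le 1) ℓ)
  set s' := obddState (ρ, σ) b' (Fin.castLE (n.sub_le 1) ℓ)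
  by_cases hss : s = s'
  · simp [hss]
  · simp only [hss, ne_eq, not_false_eq_true, true_and]
    rw [show #{x : Fin w → Bool → Fin w | uncurry x s = uncurry x s'} =
        #{f : Fin w × Bool → Fin w | f s = f s'} from card_filter_uncurry fun f => f s = f s',
      ← Fintype.card_congr (Equiv.curry _ _ _), ← card_filter_apply_eq_apply_mul_card hss,
      Fintype.card_fin]

theorem card_filter_obddEval_eq [NeZero n] {k : ℕ} (a : Fin k → Fin n → Bool)
    (lv : Fin k → Bool) :
    #{ω : Fin w × (Fin (n - 1) → Fin w → Bool → Fin w) × (Fin w → Bool → Bool) |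
        ∀ j, obddEval n w ω (a j) = lv j} =
      #{z : ObddSkeleton n w × (Fin w → Bool → Bool) |
        ∀ j, uncurry z.2 (obddState z.1 (a j) ⊤) = lv j} :=
  card_equiv (Equiv.prodAssoc _ _ _).symm (by simp [obddEval_eq_uncurry_obddState])

theorem card_not_injective_obddState_mul_le [NeZero n] {k : ℕ} {a : Fin k → Fin n → Bool}
    (ha : Injective a) :
    #{q : ObddSkeleton n w | ¬ Injective fun j => obddState q (a j) ⊤} * w ≤
      k * k * (n - 1) * Fintype.card (ObddSkeleton n w) := by
  have hsub : ({q | ¬ Injective fun j => obddState q (a j) ⊤} : Finset (ObddSkeleton n w)) ⊆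
      (univ : Finset (Fin k × Fin k × Fin (n - 1))).biUnion
        fun x => {q | ObddMergesAt x.2.2 (a x.1) (a x.2.1) q} := by
    intro q hq
    obtain ⟨j, j', hjj', hne⟩ := Function.not_injective_iff.mp (mem_filter.mp hq).2
    obtain ⟨ℓ, hℓ⟩ := exists_obddMergesAt_of_ne (ha.ne hne) q hjj'
    exact mem_biUnion.mpr ⟨(j, j', ℓ), mem_univ _, mem_filter.mpr ⟨mem_univ _, hℓ⟩⟩
  calc _ ≤ (∑ x : Fin k × Fin k × Fin (n - 1),
          #{q | ObddMergesAt x.2.2 (a x.1) (a x.2.1) q}) * w :=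
        Nat.mul_le_mul_right w ((card_le_card hsub).trans card_biUnion_le)
    _ ≤ ∑ _x : Fin k × Fin k × Fin (n - 1), Fintype.card (ObddSkeleton n w) := by
        rw [sum_mul]
        exact sum_le_sum fun x _ => card_obddMergesAt_mul_le _ _ _
    _ = _ := by simp [mul_assoc]

end Obdd

theorem stmt_14_general (n k w : ℕ) (hn : 1 ≤ n) (hw : 2 ≤ w)
    (ε : ℝ) (hε0 : 0 < ε)
    (hwk : (k : ℝ) + n * k * (k + 1) / ε ≤ w)
    (a : Fin k → Fin n → Bool) (ha : Function.Injective a)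
    (lv : Fin k → Bool) :
    |((Finset.univ.filter
        (fun ω : Fin w × (Fin (n - 1) → Fin w → Bool → Fin w) ×
            (Fin w → Bool → Bool) =>
          ∀ j, obddEval n w ω (a j) = lv j)).card : ℝ) /
        (Fintype.card (Fin w × (Fin (n - 1) → Fin w → Bool → Fin w) ×
          (Fin w → Bool → Bool)) : ℝ) -
      (1 / 2) ^ k| ≤ ε := by
  have : NeZero n := ⟨by omega⟩
  have : NeZero w := ⟨by omega⟩
  have hw0 : (0 : ℝ) < w := by exact_mod_cast (show 0 < w by omega)
  have hεw : ((k * k * (n - 1) : ℕ) : ℝ) ≤ ε * w := by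
    have hn1 : ((n - 1 : ℕ) : ℝ) ≤ n := by exact_mod_cast n.sub_le 1
    have hnk : (n : ℝ) * k * (k + 1) ≤ (w - k) * ε := (div_le_iff₀ hε0).mp (by linarith)
    push_cast
    nlinarith [mul_le_mul_of_nonneg_left hn1 (sq_nonneg (k : ℝ))]
  rw [card_filter_obddEval_eq, Fintype.card_congr (Equiv.prodAssoc _ _ _).symm,
    Fintype.card_prod, Nat.cast_mul]
  calc _ ≤ _ := abs_card_filter_div_sub_le _ (fun q => Injective fun j => obddState q (a j) ⊤)
          (by positivity) (pow_le_one₀ (by norm_num) (by norm_num))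
          fun q hq => card_filter_forall_uncurry_apply_eq hq lv
    _ ≤ (k * k * (n - 1) : ℕ) / w := by
        rw [div_le_div_iff₀ (by exact_mod_cast Fintype.card_pos) hw0]
        exact_mod_cast card_not_injective_obddState_mul_le ha
    _ ≤ ε := by rwa [div_le_iff₀ hw0]

/-- A uniformly random layered branching program of width
`w ≥ k + n·k·(k+1)/ε` (root, all successors and all output bits chosen
independently and uniformly) computes `(ε, k)`-wise independent random bits:
for pairwise distinct inputs `a₁, …, a_k` and bits `l₁, …, l_k`,
`|P(f(a₁) = l₁ ∧ … ∧ f(a_k) = l_k) − 2^{−k}| ≤ ε`. -/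
theorem stmt_14 (n k w : ℕ) (hn : 1 ≤ n) (hk : 1 ≤ k) (hw : 2 ≤ w)
    (ε : ℝ) (hε0 : 0 < ε) (hε1 : ε < 1)
    (hwk : (k : ℝ) + n * k * (k + 1) / ε ≤ w)
    (a : Fin k → Fin n → Bool) (ha : Function.Injective a)
    (lv : Fin k → Bool) :
    |((Finset.univ.filter
        (fun ω : Fin w × (Fin (n - 1) → Fin w → Bool → Fin w) ×
            (Fin w → Bool → Bool) =>
          ∀ j, obddEval n w ω (a j) = lv j)).card : ℝ) /
        (Fintype.card (Fin w × (Fin (n - 1) → Fin w → Bool → Fin w) ×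
          (Fin w → Bool → Bool)) : ℝ) -
      (1 / 2) ^ k| ≤ ε :=
  stmt_14_general n k w hn hw ε hε0 hwk a ha lv
end
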